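/- arXiv:2302.14280 — 4 statements merged into one kernel-verified Lean document; each statement's English description precedes it below -/
import Mathlib

section
/- For every x in [0,1] and every n ≥ 1, x = s_n(x) + (-1)^n · T^n(x) / (d_1(x)···d_n(x)), where s_n(x) = Σ_{k=1}^n (-1)^{k+1}/(d_1(x)···d_k(x)), with the convention that terms with an infinite digit in the denominator are 0. -/
open scoped BigOperators

/-- Reciprocal of an extended natural number as a real, with `1/∞ = 0`. -/
noncomputable def pinv (a : ℕ∞) : ℝ := ((a.toNat : ℕ) : ℝ)⁻¹

/-- First Pierce digit: `⌊1/x⌋` for `x ≠ 0`, and `∞` for `x = 0`. -/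
noncomputable def pd1 (x : ℝ) : ℕ∞ := if x = 0 then ⊤ else (⌊x⁻¹⌋₊ : ℕ∞)

/-- Pierce map `T(x) = 1 - ⌊1/x⌋ x` for `x ≠ 0`, `T(0) = 0`. -/
noncomputable def pT (x : ℝ) : ℝ := if x = 0 then 0 else 1 - (⌊x⁻¹⌋₊ : ℝ) * x

/-- `n`-th Pierce digit `d_n(x) = d_1(T^{n-1} x)` (for `n ≥ 1`). -/
noncomputable def pdig (n : ℕ) (x : ℝ) : ℕ∞ := pd1 (pT^[n-1] x)

/-- `1/(d_1(x) ⋯ d_n(x))`, with the convention that a factor `∞` makes it `0`. -/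
noncomputable def pprodR (n : ℕ) (x : ℝ) : ℝ := ∏ k ∈ Finset.Icc 1 n, pinv (pdig k x)

/-- `n`-th partial sum `s_n(x)` of the Pierce expansion of `x`. -/
noncomputable def psum (n : ℕ) (x : ℝ) : ℝ :=
  ∑ k ∈ Finset.Icc 1 n, (-1 : ℝ) ^ (k + 1) * pprodR k x

/-- The error-sum function of Pierce expansions `E(x) = Σ_{n≥1} (x - s_n(x))`. -/
noncomputable def pE (x : ℝ) : ℝ := ∑' n : ℕ, (x - psum (n + 1) x)

/-- A Pierce sequence (0-indexed: `σ k` is the paper's `σ_{k+1}`): terms are positive, strictly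
increasing while finite, and once a term is `∞` all later terms are `∞`. -/
def IsPierce (σ : ℕ → ℕ∞) : Prop :=
  1 ≤ σ 0 ∧ ∀ n, σ n < σ (n + 1) ∨ (σ n = ⊤ ∧ σ (n + 1) = ⊤)

/-- `n`-th partial sum `φ_n(σ)`. -/
noncomputable def pphiN (n : ℕ) (σ : ℕ → ℕ∞) : ℝ :=
  ∑ k ∈ Finset.range n, (-1 : ℝ) ^ k * ∏ i ∈ Finset.range (k + 1), pinv (σ i)

/-- `φ(σ) = Σ_{k≥1} (-1)^{k+1}/(σ_1 ⋯ σ_k)`. -/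
noncomputable def pphi (σ : ℕ → ℕ∞) : ℝ :=
  ∑' k : ℕ, (-1 : ℝ) ^ k * ∏ i ∈ Finset.range (k + 1), pinv (σ i)

/-- The error-sum function of Pierce sequences `E*(σ) = Σ_{n≥1} (φ(σ) - φ_n(σ))`. -/
noncomputable def pEstar (σ : ℕ → ℕ∞) : ℝ := ∑' n : ℕ, (pphi σ - pphiN (n + 1) σ)

/-- The series formula `Σ_{n≥1} (-1)^n n/(σ_1 ⋯ σ_{n+1})` for the error-sum of a sequence. -/
noncomputable def pEstarSeries (σ : ℕ → ℕ∞) : ℝ :=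
  ∑' n : ℕ, (-1 : ℝ) ^ (n + 1) * (n + 1) * ∏ i ∈ Finset.range (n + 2), pinv (σ i)

/-- The metric `ρ(x,y) = 1/x + 1/y` for `x ≠ y` (with `1/∞ = 0`), `ρ(x,x) = 0`. -/
noncomputable def prho (x y : ℕ∞) : ℝ := if x = y then 0 else pinv x + pinv y

/-- The metric `ρ^ℕ(σ,τ) = Σ_{n≥1} ρ(σ_n, τ_n)/n!` on sequences. -/
noncomputable def prhoN (σ τ : ℕ → ℕ∞) : ℝ :=
  ∑' n : ℕ, prho (σ n) (τ n) / ((n + 1).factorial : ℝ)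

/-! On `[0, 1]` one Pierce step reads `y = (1 - T y) / d₁(y)`, and `T` maps `[0, 1]` into itself.
Substituting this for `Tⁿ x` in the identity for `n` gives the identity for `n + 1`, and the
case `n = 0` is trivial. -/

lemma pinv_natCast (n : ℕ) : pinv n = (n : ℝ)⁻¹ := by
  simp [pinv]

lemma pT_mem_Icc {y : ℝ} (hy : y ∈ Set.Icc (0 : ℝ) 1) : pT y ∈ Set.Icc (0 : ℝ) 1 := by
  obtain ⟨hy0, -⟩ := hy
  rcases hy0.eq_or_lt with rfl | hpos
  · simp [pT]
  rw [pT, if_neg hpos.ne']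
  have hfloor : (⌊y⁻¹⌋₊ : ℝ) * y ≤ 1 := by
    calc (⌊y⁻¹⌋₊ : ℝ) * y ≤ y⁻¹ * y := by gcongr; exact Nat.floor_le (by positivity)
      _ = 1 := inv_mul_cancel₀ hpos.ne'
  constructor <;> nlinarith [Nat.cast_nonneg (α := ℝ) ⌊y⁻¹⌋₊]

lemma iterate_pT_mem_Icc {x : ℝ} (hx : x ∈ Set.Icc (0 : ℝ) 1) (n : ℕ) :
    pT^[n] x ∈ Set.Icc (0 : ℝ) 1 := by
  induction n with
  | zero => exact hx
  | succ n ih => rw [Function.iterate_succ_apply']; exact pT_mem_Icc ih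

lemma eq_one_sub_pT_mul_pinv_pd1 {y : ℝ} (hy : y ∈ Set.Icc (0 : ℝ) 1) :
    y = (1 - pT y) * pinv (pd1 y) := by
  obtain ⟨hy0, hy1⟩ := hy
  rcases hy0.eq_or_lt with rfl | hpos
  · simp [pT, pd1, pinv]
  have hdigit : (⌊y⁻¹⌋₊ : ℝ) ≠ 0 := by
    have : 1 ≤ ⌊y⁻¹⌋₊ := Nat.le_floor (by simpa using one_le_inv_iff₀.mpr ⟨hpos, hy1⟩)
    positivity
  rw [pT, pd1, if_neg hpos.ne', if_neg hpos.ne', pinv_natCast, sub_sub_cancel,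
    mul_comm _ y, mul_inv_cancel_right₀ hdigit]

lemma pdig_succ (n : ℕ) (x : ℝ) : pdig (n + 1) x = pd1 (pT^[n] x) := rfl

lemma pprodR_succ (n : ℕ) (x : ℝ) :
    pprodR (n + 1) x = pprodR n x * pinv (pdig (n + 1) x) := by
  rw [pprodR, pprodR, Finset.prod_Icc_succ_top (Nat.le_add_left 1 n)]

lemma psum_succ (n : ℕ) (x : ℝ) :
    psum (n + 1) x = psum n x + (-1 : ℝ) ^ (n + 2) * pprodR (n + 1) x := by
  rw [psum, psum, Finset.sum_Icc_succ_top (Nat.le_add_left 1 n)]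

theorem stmt2_general (x : ℝ) (hx : x ∈ Set.Icc (0 : ℝ) 1) (n : ℕ) :
    x = psum n x + (-1 : ℝ) ^ n * (pT^[n] x) * pprodR n x := by
  induction n with
  | zero => simp [psum, pprodR]
  | succ n ih =>
    have hstep := eq_one_sub_pT_mul_pinv_pd1 (iterate_pT_mem_Icc hx n)
    rw [← Function.iterate_succ_apply' pT, ← pdig_succ] at hstep
    rw [psum_succ, pprodR_succ]
    conv_lhs => rw [ih, hstep]
    ring

theorem stmt2 (x : ℝ) (hx : x ∈ Set.Icc (0 : ℝ) 1) (n : ℕ) (hn : 1 ≤ n) :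
    x = psum n x + (-1 : ℝ) ^ n * (pT^[n] x) * pprodR n x :=
  stmt2_general x hx n
end

section
/- For every x in [0,1] and every n ≥ 1, |x - s_n(x)| ≤ 1/n!, where s_n(x) = Σ_{k=1}^n (-1)^{k+1}/(d_1(x)···d_k(x)). Consequently s_n(x) → x and the series Σ_{n≥1} (x - s_n(x)) converges absolutely. -/
open scoped BigOperators

section aux

lemma pinv_nonneg' (a : ℕ∞) : 0 ≤ pinv a := by
  unfold pinv; positivity

lemma pd1_zero : pd1 0 = ⊤ := by simp [pd1]

lemma pinv_top : pinv ⊤ = 0 := by simp [pinv]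

lemma pinv_coe (n : ℕ) : pinv (n : ℕ∞) = ((n : ℕ) : ℝ)⁻¹ := by simp [pinv]

lemma pT_zero : pT 0 = 0 := by simp [pT]

/-- Floor facts for `0 < y ≤ 1`. -/
lemma floor_facts {y : ℝ} (hy0 : 0 < y) (hy1 : y ≤ 1) :
    1 ≤ ⌊y⁻¹⌋₊ ∧ ((⌊y⁻¹⌋₊ : ℝ)) ≤ y⁻¹ ∧ y⁻¹ < (⌊y⁻¹⌋₊ : ℝ) + 1 := by
  have h1 : (1 : ℝ) ≤ y⁻¹ := (one_le_inv_iff₀.mpr ⟨hy0, hy1⟩)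
  refine ⟨Nat.le_floor (by exact_mod_cast h1), Nat.floor_le (by positivity),
    Nat.lt_floor_add_one _⟩

lemma pT_mem_step {y : ℝ} {n : ℕ} (h0 : 0 ≤ y) (h1 : y ≤ ((n : ℝ) + 1)⁻¹) :
    0 ≤ pT y ∧ pT y ≤ ((n : ℝ) + 2)⁻¹ := by
  rcases eq_or_lt_of_le h0 with h | hy0
  · simp [pT, ← h]; positivity
  · have hy1 : y ≤ 1 := h1.trans (by
      rw [inv_le_one_iff₀]; right; push_cast; linarith)
    obtain ⟨hf1, hfle, hflt⟩ := floor_facts hy0 hy1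
    have hpt : pT y = 1 - (⌊y⁻¹⌋₊ : ℝ) * y := by simp [pT, hy0.ne']
    constructor
    · rw [hpt]
      nlinarith [mul_le_mul_of_nonneg_right hfle h0, mul_inv_cancel₀ hy0.ne']
    · have hn1 : ((n : ℝ) + 1) ≤ y⁻¹ := by
        rw [le_inv_comm₀ (by positivity) hy0]; exact h1
      have hnd : ((n : ℝ) + 1) ≤ (⌊y⁻¹⌋₊ : ℝ) := by
        have : (n + 1 : ℕ) ≤ ⌊y⁻¹⌋₊ := Nat.le_floor (by push_cast; linarith)
        exact_mod_cast this
      -- y > 1/(d+1), so pT y = 1 - d y < 1/(d+1) ≤ 1/(n+2)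
      have hygt : ((⌊y⁻¹⌋₊ : ℝ) + 1)⁻¹ < y := by
        rw [inv_lt_comm₀ (by positivity) hy0]; exact hflt
      have hd1 : (0:ℝ) < (⌊y⁻¹⌋₊ : ℝ) + 1 := by positivity
      have hmul : ((⌊y⁻¹⌋₊ : ℝ) + 1) * ((⌊y⁻¹⌋₊ : ℝ) + 1)⁻¹ = 1 := mul_inv_cancel₀ hd1.ne'
      have h2 : pT y ≤ ((⌊y⁻¹⌋₊ : ℝ) + 1)⁻¹ := by
        rw [hpt]
        nlinarith [mul_le_mul_of_nonneg_left hygt.le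
          (by positivity : (0:ℝ) ≤ (⌊y⁻¹⌋₊ : ℝ))]
      exact h2.trans (by
        apply inv_anti₀ (by positivity); linarith)

lemma pT_iter_mem {x : ℝ} (hx : x ∈ Set.Icc (0 : ℝ) 1) (n : ℕ) :
    0 ≤ pT^[n] x ∧ pT^[n] x ≤ ((n : ℝ) + 1)⁻¹ := by
  induction n with
  | zero => simpa using hx
  | succ n ih =>
    rw [Function.iterate_succ_apply']
    have := pT_mem_step ih.1 ih.2
    refine ⟨this.1, this.2.trans_eq (by push_cast; ring_nf)⟩

/-- The one-step algebraic identity. -/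
lemma pstep {y : ℝ} (h0 : 0 ≤ y) (h1 : y ≤ 1) :
    y - pinv (pd1 y) = -(pinv (pd1 y) * pT y) := by
  rcases eq_or_lt_of_le h0 with h | hy0
  · simp [pd1, ← h, pinv_top, pT_zero]
  · obtain ⟨hf1, hfle, hflt⟩ := floor_facts hy0 h1
    have hd : pd1 y = (⌊y⁻¹⌋₊ : ℕ∞) := by simp [pd1, hy0.ne']
    have hdne : ((⌊y⁻¹⌋₊ : ℕ) : ℝ) ≠ 0 := by
      exact_mod_cast Nat.one_le_iff_ne_zero.mp hf1
    rw [hd, pinv_coe]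
    simp only [pT, hy0.ne', if_false]
    have hc : ((⌊y⁻¹⌋₊ : ℕ) : ℝ) * ((⌊y⁻¹⌋₊ : ℕ) : ℝ)⁻¹ = 1 := mul_inv_cancel₀ hdne
    linear_combination (-y) * hc

/-- Key identity: `x - s_n(x) = (-1)^n Π_n(x) · T^n(x)`. -/
lemma key_identity {x : ℝ} (hx : x ∈ Set.Icc (0 : ℝ) 1) (n : ℕ) :
    x - psum n x = (-1 : ℝ) ^ n * pprodR n x * pT^[n] x := by
  induction n with
  | zero => simp [psum, pprodR]
  | succ n ih =>
    have hy := pT_iter_mem hx n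
    have hy1 : pT^[n] x ≤ 1 := hy.2.trans (by
      rw [inv_le_one_iff₀]; right; push_cast; linarith)
    have hsum : psum (n + 1) x = psum n x + (-1 : ℝ) ^ (n + 2) * pprodR (n + 1) x := by
      unfold psum; rw [Finset.sum_Icc_succ_top (Nat.le_add_left 1 n)]
    have hprod : pprodR (n + 1) x = pprodR n x * pinv (pdig (n + 1) x) := by
      unfold pprodR; rw [Finset.prod_Icc_succ_top (Nat.le_add_left 1 n)]
    have hdig : pdig (n + 1) x = pd1 (pT^[n] x) := by simp [pdig]
    have hiter : pT^[n + 1] x = pT (pT^[n] x) := Function.iterate_succ_apply' _ _ _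
    have hstep := pstep hy.1 hy1
    rw [hsum, hprod, hdig, hiter]
    have : x - psum n x = (-1 : ℝ) ^ n * pprodR n x * pT^[n] x := ih
    set P := pprodR n x
    set q := pinv (pd1 (pT^[n] x))
    have expand : x - (psum n x + (-1:ℝ)^(n+2) * (P * q))
        = (-1:ℝ)^n * P * pT^[n] x - (-1:ℝ)^(n+2) * (P * q) := by linarith
    rw [expand]
    have h2 : ((-1:ℝ))^(n+2) = (-1:ℝ)^n := by ring
    have h3 : ((-1:ℝ))^(n+1) = -(-1:ℝ)^n := by ring
    rw [h2, h3]
    have : pT^[n] x - q = -(q * pT (pT^[n] x)) := hstep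
    linear_combination ((-1 : ℝ) ^ n * P) * this

lemma pinv_pdig_le {x : ℝ} (hx : x ∈ Set.Icc (0 : ℝ) 1) {k : ℕ} (hk : 1 ≤ k) :
    pinv (pdig k x) ≤ ((k : ℝ))⁻¹ := by
  obtain ⟨m, rfl⟩ := Nat.exists_eq_add_of_le hk
  have hy := pT_iter_mem hx m
  have hdig : pdig (1 + m) x = pd1 (pT^[m] x) := by simp [pdig]
  rw [hdig]
  rcases eq_or_lt_of_le hy.1 with h | hy0
  · rw [← h, pd1_zero, pinv_top]; positivity
  · have hy1 : pT^[m] x ≤ 1 := hy.2.trans (by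
      rw [inv_le_one_iff₀]; right; push_cast; linarith)
    have hd : pd1 (pT^[m] x) = (⌊(pT^[m] x)⁻¹⌋₊ : ℕ∞) := by simp [pd1, hy0.ne']
    rw [hd, pinv_coe]
    have hk' : ((1 + m : ℕ) : ℝ) ≤ (pT^[m] x)⁻¹ := by
      rw [le_inv_comm₀ (by positivity) hy0]
      refine hy.2.trans_eq ?_
      push_cast; ring_nf
    have : (1 + m : ℕ) ≤ ⌊(pT^[m] x)⁻¹⌋₊ := Nat.le_floor hk'
    exact inv_anti₀ (by push_cast; positivity) (by exact_mod_cast this)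

lemma pprodR_nonneg (n : ℕ) (x : ℝ) : 0 ≤ pprodR n x :=
  Finset.prod_nonneg fun i _ => pinv_nonneg' _

lemma prod_Icc_inv (n : ℕ) : (∏ k ∈ Finset.Icc 1 n, ((k : ℝ))⁻¹) = ((n.factorial : ℝ))⁻¹ := by
  induction n with
  | zero => simp
  | succ n ih =>
    rw [Finset.prod_Icc_succ_top (Nat.le_add_left 1 n), ih, Nat.factorial_succ]
    push_cast
    rw [mul_inv]
    ring

lemma pprodR_le {x : ℝ} (hx : x ∈ Set.Icc (0 : ℝ) 1) (n : ℕ) :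
    pprodR n x ≤ ((n.factorial : ℝ))⁻¹ := by
  rw [← prod_Icc_inv]
  refine Finset.prod_le_prod (fun i _ => pinv_nonneg' _) fun i hi => ?_
  exact pinv_pdig_le hx (Finset.mem_Icc.mp hi).1

lemma main_bound {x : ℝ} (hx : x ∈ Set.Icc (0 : ℝ) 1) (n : ℕ) :
    |x - psum n x| ≤ ((n.factorial : ℝ))⁻¹ := by
  rw [key_identity hx n]
  have hy := pT_iter_mem hx n
  have hy1 : pT^[n] x ≤ 1 := hy.2.trans (by
    rw [inv_le_one_iff₀]; right; push_cast; linarith)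
  have hP := pprodR_nonneg n x
  rw [abs_mul, abs_mul, abs_pow, abs_neg, abs_one, one_pow, one_mul,
    abs_of_nonneg hP, abs_of_nonneg hy.1]
  calc pprodR n x * pT^[n] x ≤ pprodR n x * 1 := by
        exact mul_le_mul_of_nonneg_left hy1 hP
    _ = pprodR n x := mul_one _
    _ ≤ _ := pprodR_le hx n

lemma summable_inv_factorial : Summable fun n : ℕ => ((n.factorial : ℝ))⁻¹ := by
  have := Real.summable_pow_div_factorial 1
  simpa [one_div] using this

end aux

theorem stmt3 (x : ℝ) (hx : x ∈ Set.Icc (0 : ℝ) 1) :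
    (∀ n : ℕ, 1 ≤ n → |x - psum n x| ≤ ((n.factorial : ℝ))⁻¹) ∧
    Filter.Tendsto (fun n : ℕ => psum n x) Filter.atTop (nhds x) ∧
    Summable (fun n : ℕ => |x - psum (n + 1) x|) := by
  have hb : ∀ n : ℕ, |x - psum n x| ≤ ((n.factorial : ℝ))⁻¹ := main_bound hx
  have htz : Filter.Tendsto (fun n : ℕ => x - psum n x) Filter.atTop (nhds 0) := by
    refine squeeze_zero_norm (fun n => hb n) summable_inv_factorial.tendsto_atTop_zero
  refine ⟨fun n _ => hb n, ?_, ?_⟩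
  · have := (tendsto_const_nhds (x := x)).sub htz
    simpa using this
  · refine Summable.of_nonneg_of_le (fun n => abs_nonneg _) (fun n => hb (n + 1)) ?_
    exact (summable_inv_factorial.comp_injective (add_left_injective 1))
end

section
/- If x ∈ [0,1] has a finite Pierce expansion of length n ≥ 2 (i.e., d_n(x) < ∞ and d_{n+1}(x) = ∞), then d_{n-1}(x) + 1 < d_n(x). -/
open scoped BigOperators

lemma pT_mem {x : ℝ} (hx : x ∈ Set.Icc (0:ℝ) 1) : pT x ∈ Set.Icc (0:ℝ) 1 := by
  obtain ⟨h0, h1⟩ := hx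
  unfold pT
  split_ifs with h
  · exact ⟨le_rfl, zero_le_one⟩
  · have hx0 : 0 < x := lt_of_le_of_ne h0 (Ne.symm h)
    have hfl : (⌊x⁻¹⌋₊ : ℝ) ≤ x⁻¹ := Nat.floor_le (by positivity)
    have hinv : x * x⁻¹ = 1 := mul_inv_cancel₀ (ne_of_gt hx0)
    have h1' : (1:ℝ) ≤ x⁻¹ := by nlinarith
    have hfl1 : (1:ℝ) ≤ (⌊x⁻¹⌋₊ : ℝ) := by
      exact_mod_cast Nat.le_floor (by exact_mod_cast h1')
    constructor
    · nlinarith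
    · nlinarith

lemma pT_iter_mem_s4 {x : ℝ} (hx : x ∈ Set.Icc (0:ℝ) 1) (k : ℕ) :
    pT^[k] x ∈ Set.Icc (0:ℝ) 1 := by
  induction k with
  | zero => exact hx
  | succ k ih => rw [Function.iterate_succ_apply']; exact pT_mem ih

theorem stmt4 (x : ℝ) (hx : x ∈ Set.Icc (0 : ℝ) 1) (n : ℕ) (hn : 2 ≤ n)
    (hfin : pdig n x ≠ ⊤) (htop : pdig (n + 1) x = ⊤) :
    pdig (n - 1) x + 1 < pdig n x := by
  set y := pT^[n-2] x with hy
  have hzdef : pT^[n-1] x = pT y := by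
    have h : n - 1 = (n - 2) + 1 := by omega
    rw [hy, h, Function.iterate_succ_apply']
  set z := pT y with hz
  -- unfold the digits
  have hdn : pdig n x = pd1 z := by rw [pdig, hzdef]
  have hdn1 : pdig (n+1) x = pd1 (pT z) := by
    have h : n + 1 - 1 = (n-1) + 1 := by omega
    rw [pdig, h, Function.iterate_succ_apply', hzdef]
  have hdnm : pdig (n-1) x = pd1 y := by
    have h : n - 1 - 1 = n - 2 := by omega
    rw [pdig, h, hy]
  have hzne : z ≠ 0 := by
    intro h
    rw [hdn, pd1, if_pos h] at hfin
    exact hfin rfl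
  have hTz : pT z = 0 := by
    by_contra h
    rw [hdn1, pd1, if_neg h] at htop
    exact (ENat.coe_ne_top _) htop
  have hyne : y ≠ 0 := by
    intro h
    apply hzne
    rw [hz, h, pT, if_pos rfl]
  have hymem := pT_iter_mem_s4 hx (n-2)
  have hy0 : 0 < y := lt_of_le_of_ne hymem.1 (Ne.symm hyne)
  have hy1 : y ≤ 1 := hymem.2
  have hzmem : z ∈ Set.Icc (0:ℝ) 1 := pT_mem hymem
  have hz0 : 0 < z := lt_of_le_of_ne hzmem.1 (Ne.symm hzne)
  set d := ⌊y⁻¹⌋₊ with hd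
  set m := ⌊z⁻¹⌋₊ with hm
  -- z = 1 - d * y
  have hzeq : z = 1 - (d : ℝ) * y := by rw [hz, pT, if_neg hyne]
  -- m * z = 1
  have hmz : (m : ℝ) * z = 1 := by
    have := hTz
    rw [pT, if_neg hzne] at this
    linarith
  -- y⁻¹ < d + 1
  have hylt : y⁻¹ < (d : ℝ) + 1 := by exact_mod_cast Nat.lt_floor_add_one y⁻¹
  have hyinv : y * y⁻¹ = 1 := mul_inv_cancel₀ (ne_of_gt hy0)
  have h1lt : 1 < ((d : ℝ) + 1) * y := by nlinarith
  -- z < 1/(d+1)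
  have hzlt : ((d : ℝ) + 1) * z < 1 := by
    rw [hzeq]; nlinarith
  -- hence d + 1 < m
  have hkey : d + 1 < m := by
    have : ((d : ℝ) + 1) < (m : ℝ) := by nlinarith
    exact_mod_cast this
  rw [hdn, hdnm, pd1, pd1, if_neg hyne, if_neg hzne, ← hd, ← hm]
  exact_mod_cast hkey
end

section
/- Let g : J → ℝ be a function on an interval J ⊆ ℝ such that: (i) there is a set D contained in the interior of J with g continuous on J \ D; (ii) for every x ∈ D, g is left-continuous or right-continuous at x and lim_{t→x⁻} g(t) > lim_{t→x⁺} g(t). If a < b in J and g(a) < y < g(b), then there exists x ∈ (a,b) \ D with g(x) = y. -/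
open scoped BigOperators

theorem stmt16 (J : Set ℝ) (hJ : J.OrdConnected) (g : ℝ → ℝ) (D : Set ℝ)
    (hD : D ⊆ interior J)
    (hcont : ∀ x ∈ J \ D, ContinuousWithinAt g J x)
    (hjump : ∀ x ∈ D, ∃ L R : ℝ,
      Filter.Tendsto g (nhdsWithin x (Set.Iio x)) (nhds L) ∧
      Filter.Tendsto g (nhdsWithin x (Set.Ioi x)) (nhds R) ∧
      R < L ∧ (g x = L ∨ g x = R))
    (a b : ℝ) (ha : a ∈ J) (hb : b ∈ J) (hab : a < b)
    (y : ℝ) (hya : g a < y) (hyb : y < g b) :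
    ∃ x ∈ Set.Ioo a b, x ∉ D ∧ g x = y := by
  have hIcc : Set.Icc a b ⊆ J := hJ.out ha hb
  set S : Set ℝ := {t | t ∈ Set.Icc a b ∧ g t < y} with hSdef
  have haS : a ∈ S := ⟨⟨le_refl a, hab.le⟩, hya⟩
  have hbdd : BddAbove S := ⟨b, fun t ht => ht.1.2⟩
  have hne : S.Nonempty := ⟨a, haS⟩
  set c := sSup S with hcdef
  have hac : a ≤ c := le_csSup hbdd haS
  have hcb : c ≤ b := csSup_le hne fun t ht => ht.1.2
  have hcJ : c ∈ J := hIcc ⟨hac, hcb⟩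
  have hSsub : S ⊆ J := fun t ht => hIcc ht.1
  have hclos : c ∈ closure S := by
    rw [hcdef]
    exact csSup_mem_closure hne hbdd
  have hSf : (nhdsWithin c S).NeBot := mem_closure_iff_nhdsWithin_neBot.mp hclos
  have hge : ∀ t ∈ Set.Ioc c b, y ≤ g t := by
    intro t ht
    by_contra h
    push_neg at h
    have htS : t ∈ S := ⟨⟨hac.trans ht.1.le, ht.2⟩, h⟩
    exact absurd (le_csSup hbdd htS) (not_le.mpr ht.1)
  -- if c < b, then any right limit value R satisfies y ≤ R
  have hRight : ∀ R : ℝ, c < b →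
      Filter.Tendsto g (nhdsWithin c (Set.Ioi c)) (nhds R) → y ≤ R := by
    intro R hcb' hR
    have hev : ∀ᶠ t in nhdsWithin c (Set.Ioi c), y ≤ g t := by
      filter_upwards [Ioc_mem_nhdsGT_of_mem ⟨le_refl c, hcb'⟩] with t ht
      exact hge t ht
    exact ge_of_tendsto hR hev
  by_cases hcD : c ∈ D
  · -- contradiction: c cannot be a jump point
    obtain ⟨L, R, hL, hR, hRL, hgc⟩ := hjump c hcD
    exfalso
    by_cases hcS : c ∈ S
    · have hcb' : c < b := by
        rcases eq_or_lt_of_le hcb with h | h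
        · exact absurd (h ▸ hcS.2) (not_lt.mpr hyb.le)
        · exact h
      have hRy : y ≤ R := hRight R hcb' hR
      rcases hgc with h | h
      · -- g c = L, but g c < y ≤ R < L
        have : L < y := h ▸ hcS.2
        exact absurd (hRy.trans_lt hRL) (not_lt.mpr this.le)
      · exact absurd (hRy.trans_eq h.symm) (not_le.mpr hcS.2)
    · -- c ∉ S : S ⊆ Iio c, so L ≤ y
      have hSlt : S ⊆ Set.Iio c := by
        intro t ht
        rcases lt_or_eq_of_le (le_csSup hbdd ht) with h | h
        · exact h
        · rw [← hcdef] at h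
          exact absurd (h ▸ ht) hcS
      have hLy : L ≤ y := by
        have hT : Filter.Tendsto g (nhdsWithin c S) (nhds L) :=
          hL.mono_left (nhdsWithin_mono c hSlt)
        have hev : ∀ᶠ t in nhdsWithin c S, g t ≤ y := by
          filter_upwards [self_mem_nhdsWithin] with t ht
          exact ht.2.le
        exact le_of_tendsto hT hev
      rcases eq_or_lt_of_le hcb with h | h
      · -- c = b : g b ∈ {L, R}, both ≤ y < g b
        rcases hgc with hg | hg
        · exact absurd (h ▸ hg ▸ hLy) (not_le.mpr (h ▸ hyb))
        · exact absurd (h ▸ hg ▸ (hRL.le.trans hLy)) (not_le.mpr (h ▸ hyb))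
      · exact absurd (lt_of_le_of_lt (hRight R h hR) hRL) (not_lt.mpr hLy)
  · -- c is a point of continuity within J
    have hcw : ContinuousWithinAt g J c := hcont c ⟨hcJ, hcD⟩
    have hgcy : g c ≤ y := by
      have hT : Filter.Tendsto g (nhdsWithin c S) (nhds (g c)) :=
        (hcw.mono hSsub).tendsto
      have hev : ∀ᶠ t in nhdsWithin c S, g t ≤ y := by
        filter_upwards [self_mem_nhdsWithin] with t ht
        exact ht.2.le
      exact le_of_tendsto hT hev
    have hcb' : c < b := by
      rcases eq_or_lt_of_le hcb with h | h
      · exact absurd (h ▸ hgcy) (not_le.mpr hyb)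
      · exact h
    have hygc : y ≤ g c := by
      have hsub : Set.Ioc c b ⊆ J := fun t ht => hIcc ⟨hac.trans ht.1.le, ht.2⟩
      have hT : Filter.Tendsto g (nhdsWithin c (Set.Ioc c b)) (nhds (g c)) :=
        (hcw.mono hsub).tendsto
      have hnb : (nhdsWithin c (Set.Ioc c b)).NeBot := by
        apply mem_closure_iff_nhdsWithin_neBot.mp
        rw [closure_Ioc hcb'.ne]
        exact ⟨le_refl c, hcb'.le⟩
      have hev : ∀ᶠ t in nhdsWithin c (Set.Ioc c b), y ≤ g t := by
        filter_upwards [self_mem_nhdsWithin] with t ht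
        exact hge t ht
      exact ge_of_tendsto hT hev
    have hgceq : g c = y := le_antisymm hgcy hygc
    have hacs : a < c := by
      rcases eq_or_lt_of_le hac with h | h
      · exact absurd (h ▸ hgceq) (ne_of_lt hya)
      · exact h
    exact ⟨c, ⟨hacs, hcb'⟩, hcD, hgceq⟩
end
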